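/- Let X be a dense linear subspace of ℓ²(S), and let S' ⊆ S be such that X↓S' is dense in ℓ²(S)↓S'. Then X↓S' fails to be an orthogonal direct summand of X if and only if there exists a ∈ X such that the truncation a↓S' (a restricted to S', extended by zero) does not belong to X. -/

import Mathlib

noncomputable section
open scoped InnerProductSpace ENNReal

/-- An orthonormal subset of an inner product space. -/
def OrthSet (k : Type*) {E : Type*} [RCLike k] [NormedAddCommGroup E]
    [InnerProductSpace k E] (B : Set E) : Prop :=
  Orthonormal k ((↑) : B → E)

/-- A maximal orthonormal system of the whole space. -/
def MaximalOrthSet (k : Type*) {E : Type*} [RCLike k] [NormedAddCommGroup E]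
    [InnerProductSpace k E] (B : Set E) : Prop :=
  OrthSet k B ∧ ∀ C : Set E, B ⊆ C → OrthSet k C → C = B

/-- An orthonormal basis (as a set): an orthonormal system whose linear span is dense. -/
def IsOrthBasisSet (k : Type*) {E : Type*} [RCLike k] [NormedAddCommGroup E]
    [InnerProductSpace k E] (B : Set E) : Prop :=
  OrthSet k B ∧ Dense (Submodule.span k B : Set E)

/-- The space has an orthonormal basis (is non-pathological). -/
def HasOrthBasis (k E : Type*) [RCLike k] [NormedAddCommGroup E]
    [InnerProductSpace k E] : Prop :=
  ∃ B : Set E, IsOrthBasisSet k B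

/-- Density: least cardinality of a dense subset. -/
def densityCard (E : Type*) [TopologicalSpace E] : Cardinal :=
  sInf { c | ∃ D : Set E, Dense D ∧ Cardinal.mk D = c }

/-- A maximal orthonormal system of a subspace `X`. -/
def MaximalOrthIn (k : Type*) {E : Type*} [RCLike k] [NormedAddCommGroup E]
    [InnerProductSpace k E] (X : Submodule k E) (B : Set E) : Prop :=
  B ⊆ X ∧ OrthSet k B ∧ ∀ C : Set E, C ⊆ X → B ⊆ C → OrthSet k C → C = B

/-- An orthonormal basis of the subspace `X`: an orthonormal subset of `X`
whose linear span is dense in `X`. -/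
def IsOrthBasisOf (k : Type*) {E : Type*} [RCLike k] [NormedAddCommGroup E]
    [InnerProductSpace k E] (X : Submodule k E) (B : Set E) : Prop :=
  B ⊆ X ∧ OrthSet k B ∧ (X : Set E) ⊆ closure (Submodule.span k B : Set E)

/-- `X₀` is an orthogonal direct summand of `X`. -/
def IsOrthSummand (k : Type*) {E : Type*} [RCLike k] [NormedAddCommGroup E]
    [InnerProductSpace k E] (X X₀ : Submodule k E) : Prop :=
  ∃ X'' : Submodule k E, X'' ≤ X ∧ (∀ u ∈ X₀, ∀ v ∈ X'', (inner k u v : k) = 0) ∧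
    X₀ ⊔ X'' = X

/-- The closed subspace of `ℓ²(S)` of vectors with support contained in `A`. -/
def lpRes (k : Type*) {S : Type*} [RCLike k] (A : Set S) :
    Submodule k (lp (fun _ : S => k) 2) where
  carrier := {u | ∀ s ∉ A, u s = 0}
  zero_mem' := by intro s _; simp
  add_mem' := by intro a b ha hb s hs; simp [lp.coeFn_add, ha s hs, hb s hs]
  smul_mem' := by intro c a ha s hs; simp [lp.coeFn_smul, ha s hs]

/-- The truncation `u↓A` of `u ∈ ℓ²(S)` to a subset `A ⊆ S`. -/
def lpTrunc {k : Type*} {S : Type*} [RCLike k] (u : lp (fun _ : S => k) 2) (A : Set S) :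
    lp (fun _ : S => k) 2 :=
  ⟨A.indicator ⇑u, by
    refine memℓp_gen ?_
    have hs : Summable fun s => ‖u s‖ ^ (2 : ℝ≥0∞).toReal :=
      (memℓp_gen_iff (by norm_num)).1 (lp.memℓp u)
    refine hs.of_nonneg_of_le (fun s => by positivity) (fun s => ?_)
    by_cases hsA : s ∈ A
    · simp [Set.indicator, hsA]
    · simp only [Set.indicator, hsA, if_false, norm_zero]
      rw [Real.zero_rpow (by norm_num)]
      positivity⟩

section

variable {k S : Type*} [RCLike k]

theorem lpTrunc_apply (u : lp (fun _ : S => k) 2) (A : Set S) (s : S) :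
    lpTrunc u A s = A.indicator (⇑u) s :=
  rfl

theorem lpTrunc_mem_lpRes (u : lp (fun _ : S => k) 2) (A : Set S) : lpTrunc u A ∈ lpRes k A :=
  fun _ hs => Set.indicator_of_notMem hs _

theorem sub_lpTrunc_mem_lpRes_compl (u : lp (fun _ : S => k) 2) (A : Set S) :
    u - lpTrunc u A ∈ lpRes k Aᶜ := fun s hs => by
  rw [lp.coeFn_sub, Pi.sub_apply, lpTrunc_apply, Set.indicator_of_mem (not_not.1 hs), sub_self]

theorem inner_eq_zero_of_mem_lpRes_of_mem_lpRes_compl {A : Set S} {u v : lp (fun _ : S => k) 2}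
    (hu : u ∈ lpRes k A) (hv : v ∈ lpRes k Aᶜ) : ⟪u, v⟫_k = 0 := by
  have hterm (s : S) : ⟪u s, v s⟫_k = 0 := by
    by_cases hs : s ∈ A
    · rw [hv s (Set.notMem_compl_iff.2 hs), inner_zero_right]
    · rw [hu s hs, inner_zero_left]
  rw [lp.inner_eq_tsum, tsum_congr hterm, tsum_zero]

theorem mem_lpRes_compl_of_mem_orthogonal {A : Set S} {c : lp (fun _ : S => k) 2}
    (hc : c ∈ (lpRes k A)ᗮ) : c ∈ lpRes k Aᶜ := by
  classical
  intro s hs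
  have hsingle : lp.single 2 s (1 : k) ∈ lpRes k A := fun t ht =>
    lp.single_apply_ne (E := fun _ : S => k) 2 s (1 : k)
      (ne_of_mem_of_not_mem (Set.notMem_compl_iff.1 hs) ht).symm
  simpa [lp.inner_single_left] using Submodule.inner_right_of_mem_orthogonal hsingle hc

theorem lpTrunc_eq_of_add_eq {A : Set S} {a b c : lp (fun _ : S => k) 2}
    (hb : b ∈ lpRes k A) (hc : c ∈ lpRes k Aᶜ) (habc : b + c = a) : lpTrunc a A = b := by
  ext s
  rw [lpTrunc_apply, ← habc]
  by_cases hs : s ∈ A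
  · rw [Set.indicator_of_mem hs, lp.coeFn_add, Pi.add_apply, hc s (Set.notMem_compl_iff.2 hs),
      add_zero]
  · rw [Set.indicator_of_notMem hs, hb s hs]

theorem isOrthSummand_of_forall_lpTrunc_mem {X : Submodule k (lp (fun _ : S => k) 2)}
    {A : Set S} (htrunc : ∀ a ∈ X, lpTrunc a A ∈ X) :
    IsOrthSummand k X (X ⊓ lpRes k A) := by
  refine ⟨X ⊓ lpRes k Aᶜ, inf_le_left,
    fun u hu v hv => inner_eq_zero_of_mem_lpRes_of_mem_lpRes_compl hu.2 hv.2,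
    le_antisymm (sup_le inf_le_left inf_le_left) fun a ha => ?_⟩
  rw [← add_sub_cancel (lpTrunc a A) a]
  exact Submodule.add_mem_sup ⟨htrunc a ha, lpTrunc_mem_lpRes a A⟩
    ⟨X.sub_mem ha (htrunc a ha), sub_lpTrunc_mem_lpRes_compl a A⟩

/-- A complement `X''` orthogonal to `X↓A` is orthogonal to its closure `ℓ²(S)↓A`, so its
vectors vanish on `A`; hence `a = b + c` with `b ∈ X↓A`, `c ∈ X''` forces `a↓A = b`. -/
theorem lpTrunc_mem_of_isOrthSummand {X : Submodule k (lp (fun _ : S => k) 2)} {A : Set S}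
    (hdense : (lpRes k A : Set (lp (fun _ : S => k) 2)) ⊆
      closure ((X ⊓ lpRes k A : Submodule k (lp (fun _ : S => k) 2)) :
        Set (lp (fun _ : S => k) 2)))
    (hsum : IsOrthSummand k X (X ⊓ lpRes k A)) {a : lp (fun _ : S => k) 2} (ha : a ∈ X) :
    lpTrunc a A ∈ X := by
  obtain ⟨X'', -, horth, hsup⟩ := hsum
  have hres_le : lpRes k A ≤ (X ⊓ lpRes k A).topologicalClosure := by
    rwa [← SetLike.coe_subset_coe, Submodule.topologicalClosure_coe]
  have hX''_le : X'' ≤ lpRes k Aᶜ := by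
    intro c hc
    have hc_perp : c ∈ (X ⊓ lpRes k A)ᗮ :=
      (Submodule.mem_orthogonal _ c).2 fun u hu => horth u hu c hc
    rw [← Submodule.orthogonal_closure] at hc_perp
    exact mem_lpRes_compl_of_mem_orthogonal (Submodule.orthogonal_le hres_le hc_perp)
  obtain ⟨b, hb, c, hc, habc⟩ := Submodule.mem_sup.1 (hsup ▸ ha)
  rw [lpTrunc_eq_of_add_eq hb.2 (hX''_le hc) habc]
  exact hb.1

end

theorem stmt16_general {k : Type*} [RCLike k] {S : Type*}
    (X : Submodule k (lp (fun _ : S => k) 2))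
    (S' : Set S)
    (hdense : (lpRes k S' : Set (lp (fun _ : S => k) 2)) ⊆
      closure ((X ⊓ lpRes k S' : Submodule k (lp (fun _ : S => k) 2)) :
        Set (lp (fun _ : S => k) 2))) :
    ¬ IsOrthSummand k X (X ⊓ lpRes k S') ↔ ∃ a ∈ X, lpTrunc a S' ∉ X := by
  have hsummand_iff : IsOrthSummand k X (X ⊓ lpRes k S') ↔ ∀ a ∈ X, lpTrunc a S' ∈ X :=
    ⟨fun hsum _ ha => lpTrunc_mem_of_isOrthSummand hdense hsum ha,
      isOrthSummand_of_forall_lpTrunc_mem⟩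
  simpa using not_congr hsummand_iff

/-- `X↓S'` fails to be an orthogonal direct summand of `X` iff some
`a ∈ X` has truncation `a↓S' ∉ X`. -/
theorem stmt16 {k : Type*} [RCLike k] {S : Type*}
    (X : Submodule k (lp (fun _ : S => k) 2))
    (hX : Dense (X : Set (lp (fun _ : S => k) 2)))
    (S' : Set S)
    (hdense : (lpRes k S' : Set (lp (fun _ : S => k) 2)) ⊆
      closure ((X ⊓ lpRes k S' : Submodule k (lp (fun _ : S => k) 2)) :
        Set (lp (fun _ : S => k) 2))) :
    ¬ IsOrthSummand k X (X ⊓ lpRes k S') ↔ ∃ a ∈ X, lpTrunc a S' ∉ X :=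
  stmt16_general X S' hdense
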